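/- arXiv:math/0609659 — 5 statements merged into one kernel-verified Lean document; each statement's English description precedes it below -/
import Mathlib

section
/- Let K be an infinite field, n ≥ 1, a ∈ Kˣ, and r ≥ 0 an integer. Let P : Multiset({1,…,n} × {1,…,n} × ℤ) → K be a function which is not identically zero and which is homogeneous of degree r, i.e. P(m) ≠ 0 implies card(m) = r. Then there exists g ∈ M_n(K[t,t⁻¹]) with det(η_a(g)) = 1 such that Σ_m P(m)·∏_{(i,j,l)∈m} c_{i,j,l}(g) ≠ 0 (a sum with only finitely many nonzero terms). In other words, every nonzero formal homogeneous polynomial of degree r in the coordinate functions has a nonvanishing point on the semigroup SL̃_{n,a} = {g : det(η_a(g)) = 1}. -/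
open LaurentPolynomial

noncomputable section

/-- Evaluation at the unit `c` : the `K`-algebra homomorphism `K[T;T⁻¹] → K`
determined by `T ↦ c` (hence `T^l ↦ c^l`). -/
def evalAt {K : Type*} [Field K] (c : Kˣ) : K[T;T⁻¹] →ₐ[K] K :=
  AddMonoidAlgebra.lift K _ ℤ ((Units.coeHom _).comp (zpowersHom _ c))

/-!
Fix a monomial `m₀` with `P m₀ ≠ 0` and let `E` be a finite set of exponents containing `0` and
those of `m₀`. On matrices whose entries only involve `T^l` with `l ∈ E`, the sum becomes an honest
nonzero polynomial `V`, homogeneous of degree `r`, in the coefficients `z_{i,j,l}`, and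
`det η_a` becomes a nonzero polynomial `D`, homogeneous of degree `n` and linear in the
variables of the first row. Split `V = ∑ₖ Vₖ` by degree in the first-row variables
(`k ≤ N`). The summands of `W = ∑ₖ D^(N-k) Vₖ` are homogeneous of the distinct degrees
`n (N - k) + r`, so `W ≠ 0`, and over an infinite field some `z` has `D(z) W(z) ≠ 0`.
Dividing the first row of `z` by `D(z)` gives a point where `D = 1` and `V = D(z)^(-N) W(z) ≠ 0`.
-/

theorem Finset.mem_image_toMultiset_sym {σ : Type*} [DecidableEq σ] {S : Finset σ} {r : ℕ}
    {m : Multiset σ} :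
    m ∈ (S.sym r).image Sym.toMultiset ↔ Multiset.card m = r ∧ ∀ p ∈ m, p ∈ S := by
  constructor
  · intro h
    obtain ⟨s, hs, rfl⟩ := mem_image.1 h
    exact ⟨s.2, mem_sym_iff.1 hs⟩
  · rintro ⟨hm, hS⟩
    exact mem_image.2 ⟨⟨m, hm⟩, mem_sym_iff.2 hS, rfl⟩

namespace MvPolynomial

variable {σ R : Type*}

theorem isHomogeneous_det [CommRing R] {ι : Type*} [Fintype ι] [DecidableEq ι]
    {A : Matrix ι ι (MvPolynomial σ R)} {d : ℕ} (hA : ∀ i j, (A i j).IsHomogeneous d) :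
    A.det.IsHomogeneous (Fintype.card ι * d) := by
  rw [Matrix.det_apply']
  refine IsHomogeneous.sum _ _ _ fun e _ => ?_
  rw [← map_intCast (C : R →+* MvPolynomial σ R), ← zero_add (Fintype.card ι * d)]
  refine (isHomogeneous_C _ _).mul ?_
  simpa using IsHomogeneous.prod Finset.univ _ (fun _ => d) fun i _ => hA (e i) i

theorem IsWeightedHomogeneous.eval_pow_mul [CommSemiring R] {w : σ → ℕ} {k : ℕ}
    {φ : MvPolynomial σ R} (hφ : φ.IsWeightedHomogeneous w k) (s : R) (z : σ → R) :
    eval (fun v => s ^ w v * z v) φ = s ^ k * eval z φ := by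
  induction hφ using IsWeightedHomogeneous.induction_on with
  | zero => simp
  | add p q _ _ hp hq => simp only [map_add, hp, hq, mul_add]
  | monomial d r hd =>
    rw [eval_monomial, eval_monomial, ← hd, Finsupp.weight_apply, Finsupp.prod, Finsupp.prod,
      Finsupp.sum]
    simp only [mul_pow, ← pow_mul, Finset.prod_mul_distrib, Finset.prod_pow_eq_pow_sum,
      smul_eq_mul, mul_comm (w _)]
    ring

theorem IsHomogeneous.weightedHomogeneousComponent [CommSemiring R] {φ : MvPolynomial σ R}
    {r : ℕ} (hφ : φ.IsHomogeneous r) (w : σ → ℕ) (k : ℕ) :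
    (weightedHomogeneousComponent w k φ).IsHomogeneous r := by
  classical
  intro d hd
  rw [coeff_weightedHomogeneousComponent] at hd
  exact hφ (by split_ifs at hd <;> simp_all)

theorem sum_weightedHomogeneousComponent_range [CommSemiring R] (w : σ → ℕ)
    (φ : MvPolynomial σ R) :
    ∑ k ∈ Finset.range (weightedTotalDegree w φ + 1), weightedHomogeneousComponent w k φ = φ := by
  conv_rhs => rw [← sum_weightedHomogeneousComponent w φ]
  refine (finsum_eq_sum_of_support_subset _ fun k hk => ?_).symm
  rw [Finset.coe_range, Set.mem_Iio, Nat.lt_succ_iff]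
  by_contra! h
  exact hk (weightedHomogeneousComponent_eq_zero _ _ h)

theorem sum_range_pow_mul_ne_zero [CommRing R] [IsDomain R] {D : MvPolynomial σ R}
    {F : ℕ → MvPolynomial σ R} {d r N k : ℕ} (hD : D.IsHomogeneous d) (hd : 0 < d) (hD0 : D ≠ 0)
    (hF : ∀ i, (F i).IsHomogeneous r) (hkN : k ≤ N) (hFk : F k ≠ 0) :
    ∑ i ∈ Finset.range (N + 1), D ^ (N - i) * F i ≠ 0 := by
  have hterm (i : ℕ) : D ^ (N - i) * F i ∈ homogeneousSubmodule σ R (d * (N - i) + r) :=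
    (hD.pow _).mul (hF i)
  intro h
  replace h := congrArg (homogeneousComponent (d * (N - k) + r)) h
  rw [map_sum, Finset.sum_eq_single k, homogeneousComponent_of_mem (hterm k), if_pos rfl,
    map_zero] at h
  · exact mul_ne_zero (pow_ne_zero _ hD0) hFk h
  · intro i hi hik
    rw [homogeneousComponent_of_mem (hterm i), if_neg]
    rw [Finset.mem_range] at hi
    intro hdeg
    have := Nat.eq_of_mul_eq_mul_left hd (Nat.add_right_cancel hdeg)
    omega
  · simp [hkN]

theorem exists_eval_eq_one_and_eval_ne_zero [Field R] [Infinite R] {D V : MvPolynomial σ R}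
    {w : σ → ℕ} {d r : ℕ} (hD : D.IsHomogeneous d) (hd : 0 < d) (hD0 : D ≠ 0)
    (hDw : ∀ s z, eval (fun v => s ^ w v * z v) D = s * eval z D)
    (hV : V.IsHomogeneous r) (hV0 : V ≠ 0) :
    ∃ z, eval z D = 1 ∧ eval z V ≠ 0 := by
  set N := weightedTotalDegree w V
  set F := fun k => weightedHomogeneousComponent w k V
  have hVF : ∑ k ∈ Finset.range (N + 1), F k = V := sum_weightedHomogeneousComponent_range w V
  obtain ⟨k, hk, hFk⟩ := Finset.exists_ne_zero_of_sum_ne_zero (hVF ▸ hV0)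
  set W := ∑ k ∈ Finset.range (N + 1), D ^ (N - k) * F k
  have hW0 : W ≠ 0 := sum_range_pow_mul_ne_zero hD hd hD0
    (fun k => hV.weightedHomogeneousComponent w k) (Nat.lt_succ_iff.1 (Finset.mem_range.1 hk)) hFk
  obtain ⟨z, hz⟩ : ∃ z, eval z (D * W) ≠ 0 := by
    by_contra! h
    exact mul_ne_zero hD0 hW0 (funext fun z => by rw [h, map_zero])
  rw [map_mul] at hz
  set c := eval z D
  have hc : c ≠ 0 := left_ne_zero_of_mul hz
  refine ⟨fun v => c⁻¹ ^ w v * z v, by rw [hDw, inv_mul_cancel₀ hc], ?_⟩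
  have hVW : eval (fun v => c⁻¹ ^ w v * z v) V = (c ^ N)⁻¹ * eval z W := by
    rw [← hVF, map_sum, map_sum, Finset.mul_sum]
    refine Finset.sum_congr rfl fun k hk => ?_
    rw [(weightedHomogeneousComponent_isWeightedHomogeneous k V).eval_pow_mul, map_mul, map_pow,
      pow_sub₀ _ hc (Nat.lt_succ_iff.1 (Finset.mem_range.1 hk)), inv_pow]
    simp only [F]
    field_simp
  rw [hVW]
  exact mul_ne_zero (inv_ne_zero (pow_ne_zero _ hc)) (right_ne_zero_of_mul hz)

section Formal

variable [CommSemiring R] [DecidableEq σ]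

theorem eval_monomial_toFinsupp (z : σ → R) (m : Multiset σ) (c : R) :
    eval z (monomial (Multiset.toFinsupp m) c) = c * (m.map z).prod := by
  rw [eval_monomial, Finset.prod_multiset_map_count]
  rfl

def restrictFormal (S : Finset σ) (r : ℕ) (P : Multiset σ → R) : MvPolynomial σ R :=
  ∑ m ∈ (S.sym r).image Sym.toMultiset, monomial (Multiset.toFinsupp m) (P m)

variable {S : Finset σ} {r : ℕ} {P : Multiset σ → R}

theorem eval_restrictFormal (z : σ → R) :
    eval z (restrictFormal S r P) =
      ∑ m ∈ (S.sym r).image Sym.toMultiset, P m * (m.map z).prod := by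
  simp only [restrictFormal, map_sum, eval_monomial_toFinsupp]

theorem isHomogeneous_restrictFormal : (restrictFormal S r P).IsHomogeneous r := by
  refine IsHomogeneous.sum _ _ _ fun m hm => isHomogeneous_monomial _ ?_
  rw [← (Finset.mem_image_toMultiset_sym.1 hm).1, ← Multiset.toFinsupp_sum_eq]
  rfl

theorem coeff_restrictFormal {m : Multiset σ} (hm : Multiset.card m = r) (hS : ∀ p ∈ m, p ∈ S) :
    coeff (Multiset.toFinsupp m) (restrictFormal S r P) = P m := by
  rw [restrictFormal, coeff_sum, Finset.sum_eq_single m]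
  · rw [coeff_monomial, if_pos rfl]
  · exact fun m' _ hne => by rw [coeff_monomial, if_neg (Multiset.toFinsupp.injective.ne hne)]
  · exact fun h => absurd (Finset.mem_image_toMultiset_sym.2 ⟨hm, hS⟩) h

theorem finsum_mul_prod_map_eq_eval_restrictFormal (hP : ∀ m, P m ≠ 0 → Multiset.card m = r)
    {c z : σ → R} (hcS : ∀ p ∈ S, c p = z p) (hc : ∀ p ∉ S, c p = 0) :
    ∑ᶠ m, P m * (m.map c).prod = eval z (restrictFormal S r P) := by
  rw [eval_restrictFormal, finsum_eq_sum_of_support_subset]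
  · refine Finset.sum_congr rfl fun m hm => ?_
    rw [Multiset.map_congr rfl fun p hp => hcS p ((Finset.mem_image_toMultiset_sym.1 hm).2 p hp)]
  · intro m hm
    refine Finset.mem_image_toMultiset_sym.2 ⟨hP m (left_ne_zero_of_mul hm), fun p hp => ?_⟩
    by_contra hpS
    exact right_ne_zero_of_mul hm (Multiset.prod_eq_zero (Multiset.mem_map.2 ⟨p, hp, hc p hpS⟩))

end Formal

end MvPolynomial

section Laurent

variable {K : Type*} [Field K] {n : ℕ}

theorem evalAt_C (a : Kˣ) (c : K) : evalAt a (C c) = c := by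
  rw [C_eq_algebraMap, AlgHom.commutes, Algebra.algebraMap_self, RingHom.id_apply]

theorem evalAt_T (a : Kˣ) (l : ℤ) : evalAt a (T l) = ↑(a ^ l) := by
  rw [T, evalAt, AddMonoidAlgebra.lift_single]
  simp [zpowersHom]

def laurentMatrix (E : Finset ℤ) (z : Fin n × Fin n × ℤ → K) : Matrix (Fin n) (Fin n) K[T;T⁻¹] :=
  Matrix.of fun i j => ∑ l ∈ E, C (z (i, j, l)) * T l

theorem coeff_laurentMatrix (E : Finset ℤ) (z : Fin n × Fin n × ℤ → K) (i j : Fin n) (l : ℤ) :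
    (laurentMatrix E z i j).coeff l = if l ∈ E then z (i, j, l) else 0 := by
  simp [laurentMatrix, ← single_eq_C_mul_T, AddMonoidAlgebra.coeff_sum,
    AddMonoidAlgebra.coeff_single, Finsupp.single_apply]

def genericEvalMatrix (a : Kˣ) (E : Finset ℤ) :
    Matrix (Fin n) (Fin n) (MvPolynomial (Fin n × Fin n × ℤ) K) :=
  Matrix.of fun i j => ∑ l ∈ E, MvPolynomial.C (↑(a ^ l) : K) * MvPolynomial.X (i, j, l)

theorem det_map_evalAt_laurentMatrix (a : Kˣ) (E : Finset ℤ) (z : Fin n × Fin n × ℤ → K) :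
    ((laurentMatrix E z).map fun q => evalAt a q).det =
      MvPolynomial.eval z (genericEvalMatrix a E).det := by
  rw [RingHom.map_det]
  congr 1
  ext i j
  simp only [laurentMatrix, genericEvalMatrix, RingHom.mapMatrix_apply, Matrix.map_apply,
    Matrix.of_apply, map_sum, map_mul, evalAt_C, evalAt_T, MvPolynomial.eval_C,
    MvPolynomial.eval_X]
  exact Finset.sum_congr rfl fun l _ => mul_comm _ _

theorem isHomogeneous_det_genericEvalMatrix (a : Kˣ) (E : Finset ℤ) :
    (genericEvalMatrix (n := n) a E).det.IsHomogeneous n := by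
  simpa using MvPolynomial.isHomogeneous_det (A := genericEvalMatrix a E) (d := 1) fun i j =>
    MvPolynomial.IsHomogeneous.sum _ _ _ fun l _ => MvPolynomial.isHomogeneous_C_mul_X _ (i, j, l)

theorem eval_rowScale_det_genericEvalMatrix (a : Kˣ) (E : Finset ℤ) (i₀ : Fin n) (s : K)
    (z : Fin n × Fin n × ℤ → K) :
    MvPolynomial.eval (fun v => s ^ (if v.1 = i₀ then 1 else 0) * z v)
      (genericEvalMatrix a E).det = s * MvPolynomial.eval z (genericEvalMatrix a E).det := by
  rw [RingHom.map_det, RingHom.map_det]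
  have hrow : (MvPolynomial.eval fun v => s ^ (if v.1 = i₀ then 1 else 0) * z v).mapMatrix
      (genericEvalMatrix a E) = Matrix.of fun i j => s ^ (if i = i₀ then 1 else 0) *
        (MvPolynomial.eval z).mapMatrix (genericEvalMatrix a E) i j := by
    ext i j
    simp [genericEvalMatrix, Finset.mul_sum, mul_left_comm]
  rw [hrow, Matrix.det_mul_column, Finset.prod_pow_eq_pow_sum, Finset.sum_ite_eq',
    if_pos (Finset.mem_univ _), pow_one]

theorem det_genericEvalMatrix_ne_zero (a : Kˣ) {E : Finset ℤ} (hE : 0 ∈ E) :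
    (genericEvalMatrix (n := n) a E).det ≠ 0 := by
  intro h
  set e : Fin n × Fin n × ℤ → K := fun v => if v.1 = v.2.1 ∧ v.2.2 = 0 then 1 else 0
  have hone : (MvPolynomial.eval e).mapMatrix (genericEvalMatrix a E) = 1 := by
    ext i j
    by_cases hij : i = j <;> simp [e, genericEvalMatrix, Matrix.one_apply, hij, hE]
  simpa [RingHom.map_det, hone] using congrArg (MvPolynomial.eval e) h

end Laurent

/-- over an infinite field, every nonzero formal *homogeneous* polynomial of
degree `r` in the coordinate functions `c_{i,j,l}` has a nonvanishing point on the
semigroup `SL̃_{n,a} = {g : det(η_a(g)) = 1}`.  Monomials are encoded as multisets `m` of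
indices `(i,j,l)`; the value of such a monomial at `g` is
`∏_{(i,j,l)∈m} c_{i,j,l}(g)` (product with multiplicity), where `c_{i,j,l}(g)` is the
coefficient of `T^l` in the `(i,j)` entry of `g`.  The sum `∑ᶠ` has only finitely many
nonzero terms. -/
theorem exists_nonvanishing_point_SL {K : Type*} [Field K] [Infinite K]
    (n : ℕ) (hn : 1 ≤ n) (a : Kˣ) (r : ℕ)
    (P : Multiset (Fin n × Fin n × ℤ) → K)
    (hP : ∃ m, P m ≠ 0)
    (hhom : ∀ m, P m ≠ 0 → Multiset.card m = r) :
    ∃ g : Matrix (Fin n) (Fin n) K[T;T⁻¹],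
      (g.map fun q => evalAt a q).det = 1 ∧
      (∑ᶠ m : Multiset (Fin n × Fin n × ℤ),
        P m * (m.map fun p => (AddMonoidAlgebra.coeff (g p.1 p.2.1)) p.2.2).prod) ≠ 0 := by
  classical
  obtain ⟨m₀, hm₀⟩ := hP
  set E := insert 0 (m₀.map fun p => p.2.2).toFinset
  set S : Finset (Fin n × Fin n × ℤ) := Finset.univ ×ˢ Finset.univ ×ˢ E
  have hmemS (p : Fin n × Fin n × ℤ) : p ∈ S ↔ p.2.2 ∈ E := by simp [S]
  have hm₀S : ∀ p ∈ m₀, p ∈ S := fun p hp =>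
    (hmemS p).2 (Finset.mem_insert_of_mem (Multiset.mem_toFinset.2 (Multiset.mem_map_of_mem _ hp)))
  have hV0 : MvPolynomial.restrictFormal S r P ≠ 0 := fun h => hm₀ <| by
    rw [← MvPolynomial.coeff_restrictFormal (P := P) (hhom m₀ hm₀) hm₀S, h,
      MvPolynomial.coeff_zero]
  obtain ⟨z, hz, hzP⟩ := MvPolynomial.exists_eval_eq_one_and_eval_ne_zero
    (isHomogeneous_det_genericEvalMatrix a E) hn
    (det_genericEvalMatrix_ne_zero a (Finset.mem_insert_self 0 _))
    (eval_rowScale_det_genericEvalMatrix a E ⟨0, hn⟩) MvPolynomial.isHomogeneous_restrictFormal hV0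
  refine ⟨laurentMatrix E z, by rwa [det_map_evalAt_laurentMatrix], ?_⟩
  rwa [MvPolynomial.finsum_mul_prod_map_eq_eval_restrictFormal hhom (z := z)]
  · exact fun p hp => by rw [coeff_laurentMatrix, if_pos ((hmemS p).1 hp)]
  · exact fun p hp => by rw [coeff_laurentMatrix, if_neg (mt (hmemS p).2 hp)]

end
end

section
/- Let K be an infinite field and n, r ≥ 1. For all i, j, k, l ∈ I(ℤ,r): (i) if j and k do not lie in the same Σ̂_r-orbit of I(ℤ,r), then ξ_{i,j} ∘ ξ_{k,l} = 0; (ii) ξ_{i,i} ∘ ξ_{i,j} = ξ_{i,j} = ξ_{i,j} ∘ ξ_{j,j}. -/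
noncomputable section

namespace AffineSchur

variable (K : Type*) [Field K] (n r : ℕ)

/-- The right action of the pair `(σ,ε) ∈ Σ̂_r = Σ_r ⋉ ℤ^r` on `I(ℤ,r)`:
`i·(σ,ε) = i∘σ + n·ε`. -/
def act (σ : Equiv.Perm (Fin r)) (ε : Fin r → ℤ) (i : Fin r → ℤ) : Fin r → ℤ :=
  fun k => i (σ k) + n * ε k

/-- The tensor space `Ẽ^{⊗r}`: the free `K`-module with basis `(v_i)_{i ∈ I(ℤ,r)}`. -/
abbrev TensorSpace := (Fin r → ℤ) →₀ K

/-- The right-translation operator `T_{σ,ε} : v_i ↦ v_{i·(σ,ε)}`. -/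
def transOp (σ : Equiv.Perm (Fin r)) (ε : Fin r → ℤ) :
    Module.End K (TensorSpace K r) :=
  Finsupp.lmapDomain K K (act n r σ ε)

/-- The finite set `{k : (k,l) lies in the Σ̂_r-orbit of (i,j)}`. -/
def xiSupport (i j l : Fin r → ℤ) : Finset (Fin r → ℤ) := by
  classical
  exact (Finset.univ.filter fun σ : Equiv.Perm (Fin r) =>
      ∀ k, (n : ℤ) ∣ (l k - j (σ k))).image
    fun σ => fun k => i (σ k) + (l k - j (σ k))

/-- The operator `ξ_{i,j} ∈ End_K(Ẽ^{⊗r})` given by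
`ξ_{i,j}(v_l) = Σ_{k : (k,l) in the Σ̂_r-orbit of (i,j)} v_k`. -/
def xi (i j : Fin r → ℤ) : Module.End K (TensorSpace K r) :=
  Finsupp.lsum K fun l => LinearMap.toSpanSingleton K _
    (∑ k ∈ xiSupport n r i j l, Finsupp.single k (1 : K))

/-- The centralizer algebra `End_{KΣ̂_r}(Ẽ^{⊗r})` of all the translation operators
`T_{σ,ε}` inside `End_K(Ẽ^{⊗r})` — the affine Schur algebra `S̃(n,r)`. -/
def affineSchur : Subalgebra K (Module.End K (TensorSpace K r)) :=
  Subalgebra.centralizer K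
    (Set.range fun p : Equiv.Perm (Fin r) × (Fin r → ℤ) => transOp K n r p.1 p.2)

end AffineSchur

/-!
`ξ_{i,j} v_l` is a sum of basis vectors `v_p` with `(p,l)` in the orbit of `(i,j)`: it vanishes
unless `l` lies in the orbit of `j`, and every such `p` lies in the orbit of `i`. Since the orbit
of `(i,i)` meets `I(ℤ,r) × {p}` only in `(p,p)`, the operator `ξ_{i,i}` fixes `v_p` for `p` in the
orbit of `i`. Both parts of the theorem follow by evaluating on basis vectors.
-/

namespace AffineSchur

section

variable {K : Type*} [Field K] {n r : ℕ}

def SameOrbit (n r : ℕ) (a b : Fin r → ℤ) : Prop :=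
  ∃ (σ : Equiv.Perm (Fin r)) (ε : Fin r → ℤ), a = act n r σ ε b

lemma act_act (σ τ : Equiv.Perm (Fin r)) (ε δ : Fin r → ℤ) (b : Fin r → ℤ) :
    act n r σ ε (act n r τ δ b) = act n r (τ * σ) (δ ∘ σ + ε) b := by
  funext t
  simp only [act, Equiv.Perm.mul_apply, Function.comp_apply, Pi.add_apply]
  ring

lemma act_one_zero (b : Fin r → ℤ) : act n r 1 0 b = b := by
  funext t
  simp [act]

lemma SameOrbit.symm {a b : Fin r → ℤ} (h : SameOrbit n r a b) : SameOrbit n r b a := by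
  obtain ⟨σ, ε, rfl⟩ := h
  refine ⟨σ⁻¹, -(ε ∘ ⇑σ⁻¹), ?_⟩
  rw [act_act, mul_inv_cancel, add_neg_cancel, act_one_zero]

lemma SameOrbit.trans {a b c : Fin r → ℤ} (hab : SameOrbit n r a b) (hbc : SameOrbit n r b c) :
    SameOrbit n r a c := by
  obtain ⟨σ, ε, rfl⟩ := hab
  obtain ⟨τ, δ, rfl⟩ := hbc
  exact ⟨τ * σ, δ ∘ σ + ε, act_act σ τ ε δ c⟩

lemma mem_xiSupport_iff {i j l p : Fin r → ℤ} :
    p ∈ xiSupport n r i j l ↔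
      ∃ (σ : Equiv.Perm (Fin r)) (ε : Fin r → ℤ), l = act n r σ ε j ∧ p = act n r σ ε i := by
  classical
  simp only [xiSupport, Finset.mem_image, Finset.mem_filter, Finset.mem_univ, true_and]
  constructor
  · rintro ⟨σ, hσ, rfl⟩
    have hdiv (t : Fin r) : (n : ℤ) * ((l t - j (σ t)) / n) = l t - j (σ t) :=
      Int.mul_ediv_cancel' (hσ t)
    refine ⟨σ, fun t => (l t - j (σ t)) / n, ?_, ?_⟩ <;> funext t <;> simp only [act, hdiv]
    ring
  · rintro ⟨σ, ε, rfl, rfl⟩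
    refine ⟨σ, fun t => ⟨ε t, by simp [act]⟩, ?_⟩
    funext t
    simp [act]

lemma SameOrbit.of_mem_xiSupport {i j l p : Fin r → ℤ} (hp : p ∈ xiSupport n r i j l) :
    SameOrbit n r p i ∧ SameOrbit n r l j := by
  obtain ⟨σ, ε, hl, hp⟩ := mem_xiSupport_iff.1 hp
  exact ⟨⟨σ, ε, hp⟩, ⟨σ, ε, hl⟩⟩

lemma xi_single (i j l : Fin r → ℤ) :
    xi K n r i j (Finsupp.single l 1) = ∑ p ∈ xiSupport n r i j l, Finsupp.single p (1 : K) := by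
  simp [xi]

lemma xi_single_of_not_sameOrbit (i : Fin r → ℤ) {j l : Fin r → ℤ} (h : ¬ SameOrbit n r l j) :
    xi K n r i j (Finsupp.single l 1) = 0 := by
  rw [xi_single, Finset.sum_eq_zero]
  exact fun p hp => absurd (SameOrbit.of_mem_xiSupport hp).2 h

lemma xiSupport_self_of_sameOrbit {i p : Fin r → ℤ} (h : SameOrbit n r p i) :
    xiSupport n r i i p = {p} := by
  ext q
  simp only [mem_xiSupport_iff, Finset.mem_singleton]
  constructor
  · rintro ⟨σ, ε, hp, hq⟩
    rw [hp, hq]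
  · rintro rfl
    obtain ⟨σ, ε, hq⟩ := h
    exact ⟨σ, ε, hq, hq⟩

lemma xi_self_single_of_sameOrbit {i p : Fin r → ℤ} (h : SameOrbit n r p i) :
    xi K n r i i (Finsupp.single p 1) = Finsupp.single p 1 := by
  rw [xi_single, xiSupport_self_of_sameOrbit h, Finset.sum_singleton]

end

theorem xi_comp_xi_general (K : Type*) [Field K]
    (n r : ℕ) (i j k l : Fin r → ℤ) :
    ((¬ ∃ (σ : Equiv.Perm (Fin r)) (ε : Fin r → ℤ), k = act n r σ ε j) →
      xi K n r i j ∘ₗ xi K n r k l = 0) ∧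
    xi K n r i i ∘ₗ xi K n r i j = xi K n r i j ∧
    xi K n r i j ∘ₗ xi K n r j j = xi K n r i j := by
  refine ⟨fun hkj => ?_, ?_, ?_⟩ <;> ext m : 2 <;>
    simp only [LinearMap.comp_apply, LinearMap.zero_apply, Finsupp.lsingle_apply]
  · rw [xi_single, map_sum]
    refine Finset.sum_eq_zero fun p hp => xi_single_of_not_sameOrbit i fun hpj => hkj ?_
    exact (SameOrbit.of_mem_xiSupport hp).1.symm.trans hpj
  · rw [xi_single, map_sum]
    exact Finset.sum_congr rfl fun p hp =>
      xi_self_single_of_sameOrbit (SameOrbit.of_mem_xiSupport hp).1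
  · by_cases hmj : SameOrbit n r m j
    · rw [xi_self_single_of_sameOrbit hmj]
    · rw [xi_single_of_not_sameOrbit j hmj, map_zero, xi_single_of_not_sameOrbit i hmj]

/-- (i) if j and k are not in the same Σ̂_r-orbit of I(ℤ,r) then
ξ_{i,j} ∘ ξ_{k,l} = 0; (ii) ξ_{i,i} ∘ ξ_{i,j} = ξ_{i,j} = ξ_{i,j} ∘ ξ_{j,j}. -/
theorem xi_comp_xi (K : Type*) [Field K] [Infinite K]
    (n r : ℕ) (hn : 1 ≤ n) (hr : 1 ≤ r) (i j k l : Fin r → ℤ) :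
    ((¬ ∃ (σ : Equiv.Perm (Fin r)) (ε : Fin r → ℤ), k = act n r σ ε j) →
      xi K n r i j ∘ₗ xi K n r k l = 0) ∧
    xi K n r i i ∘ₗ xi K n r i j = xi K n r i j ∧
    xi K n r i j ∘ₗ xi K n r j j = xi K n r i j :=
  xi_comp_xi_general K n r i j k l

end AffineSchur
end
end

section
/- Let K be an infinite field and n, r ≥ 1. Let I(n,r) ⊆ I(ℤ,r) be the set of r-tuples with entries in {1,…,n}, and let R ⊆ I(n,r) be a set containing exactly one element of each orbit of the place-permutation action of Σ_r on I(n,r) (equivalently, exactly one element of each Σ̂_r-orbit of I(ℤ,r)); R is finite. Then the family (ξ_{i,i})_{i∈R} is a decomposition of the identity into orthogonal idempotents: ξ_{i,i} ∘ ξ_{i,i} = ξ_{i,i} for every i ∈ R, ξ_{i,i} ∘ ξ_{j,j} = 0 for distinct i, j ∈ R, and Σ_{i∈R} ξ_{i,i} = id on Ẽ^{⊗r}. -/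
/-!
A pair `(k, l)` in the orbit of `(i, i)` has `k = l`, so `ξ_{i,i}` fixes `v_l` when `l` lies in
the `Σ̂_r`-orbit of `i` and kills it otherwise: it is the projection onto the span of that orbit.
Reducing the entries of `l` into `{1, …, n}` modulo `n` shows that every `Σ̂_r`-orbit meets
`I(n,r)` in exactly one `Σ_r`-orbit, so `R` meets each `Σ̂_r`-orbit exactly once, and the
projections onto the orbits of the elements of `R` are orthogonal and sum to the identity.
-/

noncomputable section

namespace AffineSchur

def InOrbit (n r : ℕ) (i l : Fin r → ℤ) : Prop :=
  ∃ σ ε, act n r σ ε i = l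

lemma inOrbit_iff_exists_dvd (n r : ℕ) (i l : Fin r → ℤ) :
    InOrbit n r i l ↔ ∃ σ : Equiv.Perm (Fin r), ∀ k, (n : ℤ) ∣ l k - i (σ k) := by
  constructor
  · rintro ⟨σ, ε, rfl⟩
    exact ⟨σ, fun k => ⟨ε k, by simp [act]⟩⟩
  · rintro ⟨σ, hσ⟩
    choose ε hε using hσ
    exact ⟨σ, ε, funext fun k => by simp only [act, ← hε]; ring⟩

open Classical in
lemma xiSupport_self (n r : ℕ) (i l : Fin r → ℤ) :
    xiSupport n r i i l = if InOrbit n r i l then {l} else ∅ := by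
  rw [inOrbit_iff_exists_dvd]
  unfold xiSupport
  split_ifs with h
  · obtain ⟨σ, hσ⟩ := h
    ext x
    simp only [Finset.mem_image, Finset.mem_filter, Finset.mem_univ, true_and,
      Finset.mem_singleton]
    constructor
    · rintro ⟨τ, -, rfl⟩
      funext k; ring
    · rintro rfl
      exact ⟨σ, hσ, funext fun k => by ring⟩
  · rw [Finset.filter_eq_empty_iff.2 fun σ _ hσ => h ⟨σ, hσ⟩, Finset.image_empty]

open Classical in
lemma xi_self_single (K : Type*) [Field K] (n r : ℕ) (i l : Fin r → ℤ) (c : K) :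
    xi K n r i i (Finsupp.single l c) = if InOrbit n r i l then Finsupp.single l c else 0 := by
  simp only [xi, Finsupp.lsum_single, LinearMap.toSpanSingleton_apply, xiSupport_self]
  split_ifs <;> simp [Finsupp.smul_single]

lemma xi_self_comp_self (K : Type*) [Field K] (n r : ℕ) (i : Fin r → ℤ) :
    xi K n r i i ∘ₗ xi K n r i i = xi K n r i i := by
  classical
  refine Finsupp.lhom_ext fun l c => ?_
  rw [LinearMap.comp_apply, xi_self_single]
  split_ifs with h
  · rw [xi_self_single, if_pos h]
  · exact map_zero _

lemma xi_self_comp_xi_self_eq_zero (K : Type*) [Field K] (n r : ℕ) {i j : Fin r → ℤ}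
    (h : ∀ l, InOrbit n r j l → ¬ InOrbit n r i l) :
    xi K n r i i ∘ₗ xi K n r j j = 0 := by
  classical
  refine Finsupp.lhom_ext fun l c => ?_
  rw [LinearMap.comp_apply, xi_self_single]
  split_ifs with hj
  · rw [xi_self_single, if_neg (h l hj), LinearMap.zero_apply]
  · exact map_zero _

lemma sum_xi_self_eq_id (K : Type*) [Field K] (n r : ℕ) (R : Finset (Fin r → ℤ))
    (hR : ∀ l, ∃! i, i ∈ R ∧ InOrbit n r i l) :
    ∑ i ∈ R, xi K n r i i = LinearMap.id := by
  classical
  refine Finsupp.lhom_ext fun l c => ?_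
  obtain ⟨i₀, ⟨hi₀R, hi₀⟩, huniq⟩ := hR l
  rw [LinearMap.id_apply, LinearMap.sum_apply, Finset.sum_eq_single_of_mem i₀ hi₀R,
    xi_self_single, if_pos hi₀]
  intro i hiR hne
  rw [xi_self_single, if_neg fun hi => hne (huniq i ⟨hiR, hi⟩)]

def reduce (n r : ℕ) (l : Fin r → ℤ) : Fin r → ℤ := fun k => (l k - 1) % (n : ℤ) + 1

lemma reduce_mem_Icc {n : ℕ} (hn : 1 ≤ n) (r : ℕ) (l : Fin r → ℤ) (k : Fin r) :
    1 ≤ reduce n r l k ∧ reduce n r l k ≤ n := by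
  have hpos : (0 : ℤ) < n := by exact_mod_cast hn
  have := Int.emod_nonneg (l k - 1) hpos.ne'
  have := Int.emod_lt_of_pos (l k - 1) hpos
  unfold reduce; omega

lemma dvd_sub_reduce (n r : ℕ) (l : Fin r → ℤ) (k : Fin r) :
    (n : ℤ) ∣ l k - reduce n r l k := by
  have h : l k - reduce n r l k = (l k - 1) - (l k - 1) % n := by unfold reduce; ring
  exact h ▸ Int.dvd_self_sub_of_emod_eq rfl

lemma eq_of_dvd_sub_of_mem_Icc {n : ℤ} {a b : ℤ} (hab : n ∣ a - b)
    (ha : 1 ≤ a ∧ a ≤ n) (hb : 1 ≤ b ∧ b ≤ n) : a = b :=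
  sub_eq_zero.1 <| Int.eq_zero_of_abs_lt_dvd hab (abs_lt.2 ⟨by omega, by omega⟩)

lemma inOrbit_iff_eq_reduce_comp {n : ℕ} (hn : 1 ≤ n) (r : ℕ) {i : Fin r → ℤ}
    (hi : ∀ k, 1 ≤ i k ∧ i k ≤ (n : ℤ)) (l : Fin r → ℤ) :
    InOrbit n r i l ↔ ∃ σ : Equiv.Perm (Fin r), i = reduce n r l ∘ σ := by
  rw [inOrbit_iff_exists_dvd]
  constructor
  · rintro ⟨σ, hσ⟩
    refine ⟨σ⁻¹, funext fun t => ?_⟩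
    have := eq_of_dvd_sub_of_mem_Icc
      (by simpa using dvd_sub (hσ (σ⁻¹ t)) (dvd_sub_reduce n r l (σ⁻¹ t)))
      (reduce_mem_Icc hn r l (σ⁻¹ t)) (hi t)
    simpa using this.symm
  · rintro ⟨σ, rfl⟩
    exact ⟨σ⁻¹, fun k => by simpa using dvd_sub_reduce n r l k⟩

lemma existsUnique_mem_inOrbit {n : ℕ} (hn : 1 ≤ n) (r : ℕ) (R : Finset (Fin r → ℤ))
    (hRmem : ∀ i ∈ R, ∀ k, 1 ≤ i k ∧ i k ≤ (n : ℤ))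
    (hRrep : ∀ j : Fin r → ℤ, (∀ k, 1 ≤ j k ∧ j k ≤ (n : ℤ)) →
      ∃! i, i ∈ R ∧ ∃ σ : Equiv.Perm (Fin r), i = j ∘ σ)
    (l : Fin r → ℤ) : ∃! i, i ∈ R ∧ InOrbit n r i l := by
  obtain ⟨i, ⟨hiR, hi⟩, huniq⟩ := hRrep (reduce n r l) (reduce_mem_Icc hn r l)
  refine ⟨i, ⟨hiR, (inOrbit_iff_eq_reduce_comp hn r (hRmem i hiR) l).2 hi⟩, ?_⟩
  rintro j ⟨hjR, hj⟩
  exact huniq j ⟨hjR, (inOrbit_iff_eq_reduce_comp hn r (hRmem j hjR) l).1 hj⟩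

theorem xi_orthogonal_idempotents_general (K : Type*) [Field K]
    (n r : ℕ) (hn : 1 ≤ n)
    (R : Finset (Fin r → ℤ))
    (hRmem : ∀ i ∈ R, ∀ k, 1 ≤ i k ∧ i k ≤ (n : ℤ))
    (hRrep : ∀ j : Fin r → ℤ, (∀ k, 1 ≤ j k ∧ j k ≤ (n : ℤ)) →
      ∃! i, i ∈ R ∧ ∃ σ : Equiv.Perm (Fin r), i = j ∘ σ) :
    (∀ i ∈ R, xi K n r i i ∘ₗ xi K n r i i = xi K n r i i) ∧
    (∀ i ∈ R, ∀ j ∈ R, i ≠ j → xi K n r i i ∘ₗ xi K n r j j = 0) ∧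
    (∑ i ∈ R, xi K n r i i) = LinearMap.id := by
  have hR := existsUnique_mem_inOrbit hn r R hRmem hRrep
  refine ⟨fun i _ => xi_self_comp_self K n r i, fun i hi j hj hij => ?_,
    sum_xi_self_eq_id K n r R hR⟩
  exact xi_self_comp_xi_self_eq_zero K n r fun l hjl hil =>
    hij ((hR l).unique ⟨hi, hil⟩ ⟨hj, hjl⟩)

/-- if R ⊆ I(n,r) is a (finite) set containing exactly one element of each
orbit of the place-permutation action of Σ_r on I(n,r), then (ξ_{i,i})_{i∈R} is a
decomposition of the identity of End_K(Ẽ^{⊗r}) into orthogonal idempotents. -/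
theorem xi_orthogonal_idempotents (K : Type*) [Field K] [Infinite K]
    (n r : ℕ) (hn : 1 ≤ n) (hr : 1 ≤ r)
    (R : Finset (Fin r → ℤ))
    (hRmem : ∀ i ∈ R, ∀ k, 1 ≤ i k ∧ i k ≤ (n : ℤ))
    (hRrep : ∀ j : Fin r → ℤ, (∀ k, 1 ≤ j k ∧ j k ≤ (n : ℤ)) →
      ∃! i, i ∈ R ∧ ∃ σ : Equiv.Perm (Fin r), i = j ∘ σ) :
    (∀ i ∈ R, xi K n r i i ∘ₗ xi K n r i i = xi K n r i i) ∧
    (∀ i ∈ R, ∀ j ∈ R, i ≠ j → xi K n r i i ∘ₗ xi K n r j j = 0) ∧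
    (∑ i ∈ R, xi K n r i i) = LinearMap.id :=
  xi_orthogonal_idempotents_general K n r hn R hRmem hRrep

end AffineSchur
end
end

section
/- Let K be an infinite field and n, r ≥ 1. Let i, j, l ∈ I(ℤ,r). For x ∈ I(ℤ,r) let Σ̂_x denote the stabilizer of x in Σ̂_r (a finite group), and write Σ̂_{x,y} = Σ̂_x ∩ Σ̂_y, Σ̂_{x,y,z} = Σ̂_x ∩ Σ̂_y ∩ Σ̂_z. Let D ⊆ Σ̂_j be a set containing exactly one element of each double coset Σ̂_{j,l}\Σ̂_j/Σ̂_{i,j}. Then ξ_{i,j} ∘ ξ_{j,l} = Σ_{δ∈D} [Σ̂_{i,l·δ} : Σ̂_{i,j,l·δ}] · ξ_{i,l·δ}, where l·δ denotes the right action of δ on l, [Σ̂_{i,l·δ} : Σ̂_{i,j,l·δ}] is the (finite) index of the subgroup Σ̂_i ∩ Σ̂_j ∩ Σ̂_{l·δ} in Σ̂_i ∩ Σ̂_{l·δ}, cast into K, and the sum is over the finite set D. -/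
/-!
The coefficient of `v_k` in `ξ_{i,j} ξ_{j,l} v_m` counts the `k'` with `(k, k') ∈ Σ̂·(i, j)` and
`(k', m) ∈ Σ̂·(j, l)`. The triples `(k, k', m)` arising this way form the disjoint union of the
`Σ̂`-orbits of the triples `(i, j, l·δ)`, `δ ∈ D`, one for each double coset. Inside the
orbit of `(i, j, l·δ)`, the `k'` lying over `(k, m) = (i, l·δ)·g` form a translate of the orbit
of `j` under `Σ̂_{i,l·δ}`, which has `[Σ̂_{i,l·δ} : Σ̂_{i,j,l·δ}]` elements.
-/

noncomputable section

namespace AffineSchur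

variable (K : Type*) [Field K] (n r : ℕ)

/-- The extended affine Weyl group Σ̂_r = Σ_r ⋉ ℤ^r, realized (faithfully, via its right
action i ↦ i∘σ + n·ε on I(ℤ,r)) as a subgroup of the group of permutations of I(ℤ,r). -/
def SigmaHat : Subgroup (Equiv.Perm (Fin r → ℤ)) where
  carrier := {w | ∃ (σ : Equiv.Perm (Fin r)) (ε : Fin r → ℤ), ∀ x, w x = act n r σ ε x}
  one_mem' := ⟨1, 0, fun x => by funext k; simp [act]⟩
  mul_mem' := by
    rintro w w' ⟨σ, ε, hw⟩ ⟨σ', ε', hw'⟩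
    refine ⟨σ' * σ, fun k => ε' (σ k) + ε k, fun x => funext fun k => ?_⟩
    rw [Equiv.Perm.mul_apply, hw (w' x)]
    simp only [act, hw' x, Equiv.Perm.mul_apply]
    ring
  inv_mem' := by
    rintro w ⟨σ, ε, hw⟩
    refine ⟨σ⁻¹, fun k => -ε (σ⁻¹ k), fun x => ?_⟩
    have key : w (act n r σ⁻¹ (fun k => -ε (σ⁻¹ k)) x) = x := by
      rw [hw]
      funext k
      simp only [act, Equiv.Perm.inv_def, Equiv.symm_apply_apply]
      ring
    calc w⁻¹ x = w⁻¹ (w (act n r σ⁻¹ (fun k => -ε (σ⁻¹ k)) x)) := by rw [key]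
    _ = act n r σ⁻¹ (fun k => -ε (σ⁻¹ k)) x := by rw [Equiv.Perm.inv_def, Equiv.symm_apply_apply]

/-- The stabilizer Σ̂_x of a tuple x ∈ I(ℤ,r) inside the extended affine Weyl group
Σ̂_r (a finite subgroup). -/
def hatStab (x : Fin r → ℤ) : Subgroup (Equiv.Perm (Fin r → ℤ)) :=
  SigmaHat n r ⊓ MulAction.stabilizer (Equiv.Perm (Fin r → ℤ)) x

end AffineSchur

namespace Subgroup

variable {α : Type*} [Group α]

structure IsDoubleCosetTransversal (H A B : Subgroup α) (D : Finset α) : Prop where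
  mem : ∀ δ ∈ D, δ ∈ H
  existsUnique : ∀ g ∈ H, ∃! δ, δ ∈ D ∧ ∃ u ∈ A, ∃ v ∈ B, g = u * δ * v

end Subgroup

namespace MulAction

variable {α X : Type*} [Group α] [MulAction α X]

def stabilizerIn (G : Subgroup α) (x : X) : Subgroup α := G ⊓ stabilizer α x

variable {G : Subgroup α}

theorem mem_stabilizerIn_iff {x : X} {g : α} : g ∈ stabilizerIn G x ↔ g ∈ G ∧ g • x = x :=
  Subgroup.mem_inf

theorem mem_orbit_subgroup_iff {H : Subgroup α} {y y' : X} :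
    y' ∈ orbit H y ↔ ∃ h ∈ H, h • y = y' := by
  simp only [mem_orbit_iff, Subtype.exists, Subgroup.mk_smul, exists_prop]

theorem mem_orbit_prod_iff {x y x' y' : X} :
    (x', y') ∈ orbit G (x, y) ↔ ∃ g ∈ G, g • x = x' ∧ g • y = y' := by
  simp only [mem_orbit_iff, Subtype.exists, Subgroup.mk_smul, Prod.smul_mk, Prod.mk.injEq,
    exists_prop]

theorem mem_orbit_prod_prod_iff {x y z x' y' z' : X} :
    (x', y', z') ∈ orbit G (x, y, z) ↔ ∃ g ∈ G, g • x = x' ∧ g • y = y' ∧ g • z = z' := by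
  simp only [mem_orbit_iff, Subtype.exists, Subgroup.mk_smul, Prod.smul_mk, Prod.mk.injEq,
    exists_prop]

theorem mem_orbit_prod_of_mem_orbit_prod_prod {x y z x' y' z' : X}
    (h : (x', y', z') ∈ orbit G (x, y, z)) : (x', z') ∈ orbit G (x, z) := by
  obtain ⟨g, hg, hx, -, hz⟩ := mem_orbit_prod_prod_iff.mp h
  exact mem_orbit_prod_iff.mpr ⟨g, hg, hx, hz⟩

theorem ncard_setOf_mem_orbit_prod_prod {x y z k m : X} (h : (k, m) ∈ orbit G (x, z)) :
    {y' | (k, y', m) ∈ orbit G (x, y, z)}.ncard =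
      (stabilizer α y).relIndex (stabilizerIn G x ⊓ stabilizerIn G z) := by
  obtain ⟨g₀, hg₀, rfl, rfl⟩ := mem_orbit_prod_iff.mp h
  set H := stabilizerIn G x ⊓ stabilizerIn G z
  have hfibre : {y' | (g₀ • x, y', g₀ • z) ∈ orbit G (x, y, z)} = (g₀ • ·) '' orbit H y := by
    ext y'
    rw [Set.mem_ofPred_eq, mem_orbit_prod_prod_iff]
    simp only [Set.mem_image, mem_orbit_subgroup_iff, H, Subgroup.mem_inf, mem_stabilizerIn_iff]
    constructor
    · rintro ⟨g, hg, hx, rfl, hz⟩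
      have hg' : g₀⁻¹ * g ∈ G := mul_mem (inv_mem hg₀) hg
      refine ⟨g₀⁻¹ • g • y, ⟨g₀⁻¹ * g, ?_, mul_smul _ _ _⟩, smul_inv_smul _ _⟩
      simp [mul_smul, hx, hz, hg']
    · rintro ⟨_, ⟨h, ⟨⟨hhG, hx⟩, -, hz⟩, rfl⟩, rfl⟩
      exact ⟨g₀ * h, mul_mem hg₀ hhG, by rw [mul_smul, hx], mul_smul _ _ _, by rw [mul_smul, hz]⟩
  rw [hfibre, Set.ncard_image_of_injective _ (MulAction.injective g₀), ← index_stabilizer]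
  rfl

section Transversal

variable {i j l : X} {D : Finset α}

theorem mem_orbit_prod_and_mem_orbit_prod_iff
    (hD : (stabilizerIn G j).IsDoubleCosetTransversal (stabilizerIn G i ⊓ stabilizerIn G j)
      (stabilizerIn G j ⊓ stabilizerIn G l) D) {k k' m : X} :
    (k, k') ∈ orbit G (i, j) ∧ (k', m) ∈ orbit G (j, l) ↔
      ∃ δ ∈ D, (k, k', m) ∈ orbit G (i, j, δ • l) := by
  simp only [mem_orbit_prod_iff, mem_orbit_prod_prod_iff]
  constructor
  · rintro ⟨⟨u, hu, rfl, rfl⟩, ⟨w, hw, hwj, rfl⟩⟩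
    have hg : u⁻¹ * w ∈ stabilizerIn G j :=
      mem_stabilizerIn_iff.mpr ⟨mul_mem (inv_mem hu) hw, by rw [mul_smul, hwj, inv_smul_smul]⟩
    obtain ⟨δ, ⟨hδ, a, ⟨⟨haG, hai⟩, -, haj⟩, b, ⟨-, -, hbl⟩, hab⟩, -⟩ := hD.existsUnique _ hg
    refine ⟨δ, hδ, u * a, mul_mem hu haG, ?_, ?_, ?_⟩
    · rw [mul_smul, mem_stabilizer_iff.mp hai]
    · rw [mul_smul, mem_stabilizer_iff.mp haj]
    · rw [eq_mul_of_inv_mul_eq hab]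
      simp only [mul_smul, mem_stabilizer_iff.mp hbl]
  · rintro ⟨δ, hδ, g, hg, rfl, rfl, rfl⟩
    obtain ⟨hδG, hδj⟩ := mem_stabilizerIn_iff.mp (hD.mem δ hδ)
    exact ⟨⟨g, hg, rfl, rfl⟩, g * δ, mul_mem hg hδG, by rw [mul_smul, hδj], mul_smul _ _ _⟩

theorem eq_of_mem_orbit_prod_prod
    (hD : (stabilizerIn G j).IsDoubleCosetTransversal (stabilizerIn G i ⊓ stabilizerIn G j)
      (stabilizerIn G j ⊓ stabilizerIn G l) D)
    {δ δ' : α} (hδ : δ ∈ D) (hδ' : δ' ∈ D) {k k' m : X}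
    (h : (k, k', m) ∈ orbit G (i, j, δ • l)) (h' : (k, k', m) ∈ orbit G (i, j, δ' • l)) :
    δ = δ' := by
  obtain ⟨g, hg, hgi, hgj, hgl⟩ := mem_orbit_prod_prod_iff.mp h
  obtain ⟨g', hg', rfl, rfl, rfl⟩ := mem_orbit_prod_prod_iff.mp h'
  obtain ⟨hδG, hδj⟩ := mem_stabilizerIn_iff.mp (hD.mem δ hδ)
  obtain ⟨hδ'G, hδ'j⟩ := mem_stabilizerIn_iff.mp (hD.mem δ' hδ')
  -- `u := g'⁻¹ g` fixes `i` and `j` and carries `δ • l` to `δ' • l`, so `δ' ∈ u δ (G_j ⊓ G_l)`.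
  set u := g'⁻¹ * g
  have huG : u ∈ G := mul_mem (inv_mem hg') hg
  have hu : ∀ x : X, g • x = g' • x → u • x = x := fun x hx => by
    rw [mul_smul, hx, inv_smul_smul]
  set v := δ⁻¹ * u⁻¹ * δ'
  have hvG : v ∈ G := mul_mem (mul_mem (inv_mem hδG) (inv_mem huG)) hδ'G
  have hv : ∀ x : X, δ' • x = u • δ • x → v • x = x := fun x hx => by
    rw [mul_smul, mul_smul, hx, inv_smul_smul, inv_smul_smul]
  have hvj : v • j = j := hv j (by rw [hδ'j, hδj, hu j hgj])
  have hvl : v • l = l := hv l (by rw [mul_smul, hgl, inv_smul_smul])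
  refine (hD.existsUnique δ' (hD.mem δ' hδ')).unique ⟨hδ, u, ?_, v, ?_, by simp only [v]; group⟩
    ⟨hδ', 1, one_mem _, 1, one_mem _, by group⟩
  · exact Subgroup.mem_inf.mpr ⟨mem_stabilizerIn_iff.mpr ⟨huG, hu i hgi⟩,
      mem_stabilizerIn_iff.mpr ⟨huG, hu j hgj⟩⟩
  · exact Subgroup.mem_inf.mpr ⟨mem_stabilizerIn_iff.mpr ⟨hvG, hvj⟩,
      mem_stabilizerIn_iff.mpr ⟨hvG, hvl⟩⟩

open Classical in
theorem card_eq_sum_relIndex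
    (hD : (stabilizerIn G j).IsDoubleCosetTransversal (stabilizerIn G i ⊓ stabilizerIn G j)
      (stabilizerIn G j ⊓ stabilizerIn G l) D)
    {k m : X} (S : Finset X)
    (hS : ∀ k', k' ∈ S ↔ (k, k') ∈ orbit G (i, j) ∧ (k', m) ∈ orbit G (j, l)) :
    S.card = ∑ δ ∈ D, if (k, m) ∈ orbit G (i, δ • l) then
      (stabilizer α j).relIndex (stabilizerIn G i ⊓ stabilizerIn G (δ • l)) else 0 := by
  set fibre := fun δ : α => S.filter fun k' => (k, k', m) ∈ orbit G (i, j, δ • l)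
  have hfibre : ∀ δ ∈ D, ∀ k', k' ∈ fibre δ ↔ (k, k', m) ∈ orbit G (i, j, δ • l) :=
    fun δ hδ k' => by
      rw [Finset.mem_filter, hS, mem_orbit_prod_and_mem_orbit_prod_iff hD, and_iff_right_iff_imp]
      exact fun h => ⟨δ, hδ, h⟩
  have hS_eq : S = D.biUnion fibre := by
    ext k'
    rw [Finset.mem_biUnion, hS, mem_orbit_prod_and_mem_orbit_prod_iff hD]
    exact exists_congr fun δ => and_congr_right fun hδ => (hfibre δ hδ k').symm
  have hdisj : (D : Set α).PairwiseDisjoint fibre := fun δ hδ δ' hδ' hne =>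
    Finset.disjoint_left.mpr fun k' h h' =>
      hne (eq_of_mem_orbit_prod_prod hD hδ hδ' ((hfibre δ hδ k').mp h) ((hfibre δ' hδ' k').mp h'))
  rw [hS_eq, Finset.card_biUnion hdisj]
  refine Finset.sum_congr rfl fun δ hδ => ?_
  split_ifs with hkm
  · rw [← ncard_setOf_mem_orbit_prod_prod (y := j) hkm, ← Set.ncard_coe_finset]
    exact congrArg Set.ncard (Set.ext (hfibre δ hδ))
  · exact Finset.card_eq_zero.mpr (Finset.eq_empty_of_forall_notMem fun k' h =>
      hkm (mem_orbit_prod_of_mem_orbit_prod_prod ((hfibre δ hδ k').mp h)))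

end Transversal

end MulAction

namespace AffineSchur

open MulAction

variable {K : Type*} [Field K] {n r : ℕ}

def actPerm (n : ℕ) (σ : Equiv.Perm (Fin r)) (ε : Fin r → ℤ) : Equiv.Perm (Fin r → ℤ) where
  toFun := act n r σ ε
  invFun := act n r σ⁻¹ fun t => -ε (σ⁻¹ t)
  left_inv x := by funext t; simp only [act, Equiv.Perm.inv_def, Equiv.apply_symm_apply]; ring
  right_inv x := by funext t; simp only [act, Equiv.Perm.inv_def, Equiv.symm_apply_apply]; ring

theorem actPerm_mem_sigmaHat (σ : Equiv.Perm (Fin r)) (ε : Fin r → ℤ) :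
    actPerm n σ ε ∈ SigmaHat n r :=
  ⟨σ, ε, fun _ => rfl⟩

theorem mem_xiSupport_iff_s12 {i j l k : Fin r → ℤ} :
    k ∈ xiSupport n r i j l ↔ (k, l) ∈ orbit (SigmaHat n r) (i, j) := by
  classical
  simp only [xiSupport, Finset.mem_image, Finset.mem_filter, Finset.mem_univ, true_and,
    mem_orbit_prod_iff, Equiv.Perm.smul_def]
  constructor
  · rintro ⟨σ, hσ, rfl⟩
    refine ⟨actPerm n σ fun t => (l t - j (σ t)) / n, actPerm_mem_sigmaHat σ _, ?_, ?_⟩ <;>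
      funext t <;> simp only [actPerm, Equiv.coe_fn_mk, act, Int.mul_ediv_cancel' (hσ t)]
    ring
  · rintro ⟨w, ⟨σ, ε, hw⟩, rfl, rfl⟩
    refine ⟨σ, fun t => ⟨ε t, ?_⟩, funext fun t => ?_⟩ <;> simp only [hw, act] <;> ring

theorem xi_single_one (i j m : Fin r → ℤ) :
    xi K n r i j (Finsupp.single m 1) = ∑ k ∈ xiSupport n r i j m, Finsupp.single k 1 := by
  rw [xi, Finsupp.lsum_single, LinearMap.toSpanSingleton_apply, one_smul]

open Classical in
theorem xi_single_one_apply (i j m k : Fin r → ℤ) :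
    xi K n r i j (Finsupp.single m 1) k =
      if (k, m) ∈ orbit (SigmaHat n r) (i, j) then 1 else 0 := by
  simp only [xi_single_one, Finsupp.finsetSum_apply, Finsupp.single_apply, Finset.sum_ite_eq',
    mem_xiSupport_iff_s12]

open Classical in
theorem xi_comp_xi_single_one_apply (i j l m k : Fin r → ℤ) :
    (xi K n r i j ∘ₗ xi K n r j l) (Finsupp.single m 1) k =
      ((xiSupport n r j l m).filter fun k' => (k, k') ∈ orbit (SigmaHat n r) (i, j)).card := by
  rw [LinearMap.comp_apply, xi_single_one, map_sum, Finsupp.finsetSum_apply]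
  simp only [xi_single_one_apply, Finset.sum_boole]

/-- The realization `w ↦ (x ↦ x·w)` of `Σ̂_r` inside the permutations of `I(ℤ,r)` is an
anti-isomorphism, so the double coset `Σ̂_{j,l}·δ·Σ̂_{i,j}` of the paper reads
`Σ̂_{i,j}·δ·Σ̂_{j,l}` here, and the right action `l·δ` becomes the application `δ(l)`. -/
theorem xi_mul_xi_double_cosets_general (K : Type*) [Field K]
    (n r : ℕ)
    (i j l : Fin r → ℤ)
    (D : Finset (Equiv.Perm (Fin r → ℤ)))
    (hD : ∀ δ ∈ D, δ ∈ hatStab n r j)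
    (hDrep : ∀ g ∈ hatStab n r j,
      ∃! δ, δ ∈ D ∧
        ∃ u ∈ hatStab n r i ⊓ hatStab n r j,
          ∃ v ∈ hatStab n r j ⊓ hatStab n r l, g = u * δ * v) :
    xi K n r i j ∘ₗ xi K n r j l =
      ∑ δ ∈ D,
        (((MulAction.stabilizer (Equiv.Perm (Fin r → ℤ)) j).relIndex
            (hatStab n r i ⊓ hatStab n r (δ l)) : ℕ) : K) • xi K n r i (δ l) := by
  classical
  ext m k
  rw [LinearMap.comp_apply, Finsupp.lsingle_apply, xi_comp_xi_single_one_apply,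
    card_eq_sum_relIndex ⟨hD, hDrep⟩ _ fun k' => by
      rw [Finset.mem_filter, mem_xiSupport_iff_s12, and_comm],
    Nat.cast_sum, LinearMap.comp_apply, Finsupp.lsingle_apply, LinearMap.sum_apply,
    Finsupp.finsetSum_apply]
  refine Finset.sum_congr rfl fun δ _ => ?_
  rw [LinearMap.smul_apply, Finsupp.smul_apply, xi_single_one_apply, smul_eq_mul, mul_ite,
    mul_one, mul_zero, Nat.cast_ite, Nat.cast_zero]
  rfl

/-- the multiplication rule
ξ_{i,j} ∘ ξ_{j,l} = Σ_{δ∈D} [Σ̂_{i,l·δ} : Σ̂_{i,j,l·δ}] · ξ_{i,l·δ},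
where D ⊆ Σ̂_j is a set containing exactly one element of each double coset
Σ̂_{j,l}\Σ̂_j/Σ̂_{i,j}, and the finite index [Σ̂_{i,l·δ} : Σ̂_{i,j,l·δ}] of
Σ̂_i ∩ Σ̂_j ∩ Σ̂_{l·δ} in Σ̂_i ∩ Σ̂_{l·δ} is cast into K.  (Note that the realization
w ↦ (x ↦ x·w) of Σ̂_r inside the permutations of I(ℤ,r) is an anti-isomorphism, so the
double coset Σ̂_{j,l}·δ·Σ̂_{i,j} of the paper reads Σ̂_{i,j}·δ·Σ̂_{j,l} here, and the
right action l·δ becomes the application δ(l).) -/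
theorem xi_mul_xi_double_cosets (K : Type*) [Field K] [Infinite K]
    (n r : ℕ) (hn : 1 ≤ n) (hr : 1 ≤ r)
    (i j l : Fin r → ℤ)
    (D : Finset (Equiv.Perm (Fin r → ℤ)))
    (hD : ∀ δ ∈ D, δ ∈ hatStab n r j)
    (hDrep : ∀ g ∈ hatStab n r j,
      ∃! δ, δ ∈ D ∧
        ∃ u ∈ hatStab n r i ⊓ hatStab n r j,
          ∃ v ∈ hatStab n r j ⊓ hatStab n r l, g = u * δ * v) :
    xi K n r i j ∘ₗ xi K n r j l =
      ∑ δ ∈ D,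
        (((MulAction.stabilizer (Equiv.Perm (Fin r → ℤ)) j).relIndex
            (hatStab n r i ⊓ hatStab n r (δ l)) : ℕ) : K) • xi K n r i (δ l) :=
  xi_mul_xi_double_cosets_general K n r i j l D hD hDrep

end AffineSchur
end
end

section
/- Let K be an infinite field and n, r ≥ 1. For every s ∈ {1,…,n} and t ∈ ℤ, the operator D_{s,t} commutes with every right-translation operator T_{σ,ε}; that is, D_{s,t} ∈ End_{KΣ̂_r}(Ẽ^{⊗r}). (This is the statement that the diagonal action of the loop Lie algebra gl_n[t,t⁻¹] on the tensor space commutes with the action of the extended affine Weyl group Σ̂_r.) -/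
noncomputable section

namespace AffineSchur

variable (K : Type*) [Field K] (n r : ℕ)

/-- The operator D_{s,t} ∈ End_K(Ẽ^{⊗r}) (the action of the loop-algebra element
E_{st} ∈ gl_n[t,t⁻¹]): D_{s,t}(v_q) = Σ_{k=1}^{r} [q_k ≡ t (mod n)] · v_{q^k}, where q^k
is obtained from q by replacing its k-th entry q_k by q_k + s − t. -/
def Dop (s t : ℤ) : Module.End K (TensorSpace K r) := by
  classical
  exact Finsupp.lsum K fun q => LinearMap.toSpanSingleton K _
    (∑ k : Fin r, if (n : ℤ) ∣ (q k - t) then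
        Finsupp.single (Function.update q k (q k + s - t)) (1 : K) else 0)

/-! `T_{σ,ε}` carries the `σ k`-th summand of `D_{s,t} v_q` to the `k`-th summand of
`D_{s,t} v_{q·(σ,ε)}`: the congruence `q_{σ k} ≡ t (mod n)` survives adding `n ε_k`, and changing
entry `σ k` of `q` before acting is changing entry `k` of `q·(σ,ε)`. -/

section

variable {K n r}

theorem transOp_single (σ : Equiv.Perm (Fin r)) (ε : Fin r → ℤ) (q : Fin r → ℤ) (b : K) :
    transOp K n r σ ε (Finsupp.single q b) = Finsupp.single (act n r σ ε q) b :=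
  Finsupp.mapDomain_single

theorem Dop_single (s t : ℤ) (q : Fin r → ℤ) (b : K) :
    Dop K n r s t (Finsupp.single q b) = b • ∑ k : Fin r, if (n : ℤ) ∣ q k - t then
      Finsupp.single (Function.update q k (q k + s - t)) 1 else 0 := by
  simp only [Dop, Finsupp.lsum_single, LinearMap.toSpanSingleton_apply]

theorem dvd_act_sub_iff (σ : Equiv.Perm (Fin r)) (ε q : Fin r → ℤ) (k : Fin r) (t : ℤ) :
    (n : ℤ) ∣ act n r σ ε q k - t ↔ (n : ℤ) ∣ q (σ k) - t := by
  rw [act, add_sub_right_comm]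
  exact dvd_add_left (dvd_mul_right _ _)

theorem act_update (σ : Equiv.Perm (Fin r)) (ε q : Fin r → ℤ) (k : Fin r) (x : ℤ) :
    act n r σ ε (Function.update q (σ k) x) =
      Function.update (act n r σ ε q) k (x + n * ε k) := by
  funext m
  rcases eq_or_ne m k with rfl | hm
  · simp [act]
  · simp [act, Function.update_of_ne hm, Function.update_of_ne (σ.injective.ne hm)]

end

theorem Dop_commutes_transOp_general (K : Type*) [Field K]
    (n r : ℕ)
    (s t : ℤ) :
    ∀ (σ : Equiv.Perm (Fin r)) (ε : Fin r → ℤ),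
      Dop K n r s t ∘ₗ transOp K n r σ ε = transOp K n r σ ε ∘ₗ Dop K n r s t := by
  intro σ ε
  refine Finsupp.lhom_ext fun q b => ?_
  simp only [LinearMap.comp_apply, transOp_single, Dop_single, map_smul, map_sum]
  congr 1
  refine Fintype.sum_equiv σ _ _ fun k => ?_
  simp only [dvd_act_sub_iff]
  split_ifs
  · rw [transOp_single, act_update]
    congr 3
    simp only [act]
    ring
  · exact (map_zero _).symm

/-- each loop-algebra operator D_{s,t} (s ∈ {1,…,n}, t ∈ ℤ) commutes with
every right-translation operator T_{σ,ε}, i.e. D_{s,t} ∈ End_{KΣ̂_r}(Ẽ^{⊗r}): the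
diagonal action of gl_n[t,t⁻¹] on the tensor space commutes with the action of the
extended affine Weyl group Σ̂_r. -/
theorem Dop_commutes_transOp (K : Type*) [Field K] [Infinite K]
    (n r : ℕ) (hn : 1 ≤ n) (hr : 1 ≤ r)
    (s t : ℤ) (hs1 : 1 ≤ s) (hs2 : s ≤ (n : ℤ)) :
    ∀ (σ : Equiv.Perm (Fin r)) (ε : Fin r → ℤ),
      Dop K n r s t ∘ₗ transOp K n r σ ε = transOp K n r σ ε ∘ₗ Dop K n r s t :=
  Dop_commutes_transOp_general K n r s t

end AffineSchur
end
end
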